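/- For every real P > 0 there exists a constant C₆ > 0 such that for all real numbers l, L, a, g with 0 < l ≤ P, 0 ≤ L ≤ P, l/4 ≤ a ≤ l/2, and cosh(L/2) = sinh(g) · sinh(a), one has |g − |log l|| ≤ C₆. -/
import Mathlib

open Real

lemma sinh_le_mul_exp {x : ℝ} (hx : 0 ≤ x) : Real.sinh x ≤ x * Real.exp x := by
  rw [Real.sinh_eq]
  have h1 : (-(2 * x)) + 1 ≤ Real.exp (-(2 * x)) := by
    have := Real.add_one_le_exp (-(2 * x)); linarith
  have h2 : Real.exp (-x) = Real.exp (-(2 * x)) * Real.exp x := by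
    rw [← Real.exp_add]; ring_nf
  have h3 : (0 : ℝ) < Real.exp x := Real.exp_pos x
  nlinarith [Real.exp_pos (-(2 * x))]

lemma log_le_arsinh {x : ℝ} (hx : 0 < x) : Real.log x ≤ Real.arsinh x := by
  rw [Real.arsinh]
  exact Real.log_le_log hx (by nlinarith [Real.sqrt_nonneg (1 + x ^ 2)])

lemma arsinh_le_log {x : ℝ} (hx : 0 ≤ x) : Real.arsinh x ≤ Real.log (2 * x + 1) := by
  rw [Real.arsinh]
  apply Real.log_le_log (by positivity)
  have : Real.sqrt (1 + x ^ 2) ≤ x + 1 := by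
    rw [show (1 : ℝ) + x ^ 2 = (x + 1) ^ 2 - 2 * x by ring]
    calc Real.sqrt ((x + 1) ^ 2 - 2 * x) ≤ Real.sqrt ((x + 1) ^ 2) :=
          Real.sqrt_le_sqrt (by nlinarith)
      _ = |x + 1| := Real.sqrt_sq_eq_abs _
      _ = x + 1 := abs_of_nonneg (by linarith)
  linarith

/-- Logarithmic form of the right-angled pentagon estimate: for every `P > 0`
there is `C₆ > 0` such that whenever `0 < l ≤ P`, `0 ≤ L ≤ P`, `l/4 ≤ a ≤ l/2`
and `cosh (L/2) = sinh g * sinh a`, one has `|g - |log l|| ≤ C₆`. -/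
theorem pentagon_estimate_log (P : ℝ) (hP : 0 < P) :
    ∃ C₆ : ℝ, 0 < C₆ ∧
      ∀ l L a g : ℝ, 0 < l → l ≤ P → 0 ≤ L → L ≤ P → l / 4 ≤ a → a ≤ l / 2 →
        Real.cosh (L / 2) = Real.sinh g * Real.sinh a →
        |g - abs (Real.log l)| ≤ C₆ := by
  set E : ℝ := Real.exp (P / 2) with hE
  have hE1 : 1 ≤ E := Real.one_le_exp (by positivity)
  set K : ℝ := Real.log (8 * Real.cosh (P / 2) + P) with hK
  have hcosh1 : (1 : ℝ) ≤ Real.cosh (P / 2) := Real.one_le_cosh _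
  have hKpos : 0 < K := Real.log_pos (by linarith)
  have hlog2' : (0 : ℝ) ≤ Real.log 2 := Real.log_nonneg (by norm_num)
  have hlogE' : (0 : ℝ) ≤ Real.log E := Real.log_nonneg hE1
  refine ⟨K + Real.log E + Real.log 2 + 2 * |Real.log P| + 1,
    by have := abs_nonneg (Real.log P); linarith, ?_⟩
  intro l L a g hl hlP hL0 hLP ha1 ha2 heq
  have ha0 : 0 < a := lt_of_lt_of_le (by linarith) ha1
  have hsa : 0 < Real.sinh a := Real.sinh_pos_iff.2 ha0
  have hchL : (1 : ℝ) ≤ Real.cosh (L / 2) := Real.one_le_cosh _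
  have hsg : 0 < Real.sinh g := by
    by_contra h
    push_neg at h
    nlinarith
  have hg0 : 0 < g := Real.sinh_pos_iff.1 hsg
  -- upper bound on sinh a
  have hsa_up : Real.sinh a ≤ (l / 2) * E := by
    calc Real.sinh a ≤ Real.sinh (l / 2) := Real.sinh_le_sinh.2 ha2
      _ ≤ (l / 2) * Real.exp (l / 2) := sinh_le_mul_exp (by linarith)
      _ ≤ (l / 2) * E := by
          apply mul_le_mul_of_nonneg_left _ (by linarith)
          exact Real.exp_le_exp.2 (by linarith)
  -- lower bound on sinh a
  have hsa_lo : l / 4 ≤ Real.sinh a := by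
    calc l / 4 ≤ a := ha1
      _ ≤ Real.sinh a := Real.self_le_sinh_iff.2 (le_of_lt ha0)
  -- bounds on sinh g
  have hsg_lo : 2 / (l * E) ≤ Real.sinh g := by
    rw [div_le_iff₀ (by positivity)]
    have h1 : Real.sinh g * ((l / 2) * E) ≥ Real.sinh g * Real.sinh a :=
      mul_le_mul_of_nonneg_left hsa_up (le_of_lt hsg)
    nlinarith
  have hcoshLP : Real.cosh (L / 2) ≤ Real.cosh (P / 2) := by
    rw [Real.cosh_le_cosh]
    rw [abs_of_nonneg (by linarith), abs_of_nonneg (by positivity)]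
    linarith
  have hsg_up : Real.sinh g ≤ 4 * Real.cosh (P / 2) / l := by
    rw [le_div_iff₀ hl]
    nlinarith
  -- g = arsinh (sinh g)
  have hgar : g = Real.arsinh (Real.sinh g) := (Real.arsinh_sinh g).symm
  -- lower bound on g
  have hglo : Real.log 2 - Real.log l - Real.log E ≤ g := by
    rw [hgar]
    calc Real.log 2 - Real.log l - Real.log E = Real.log (2 / (l * E)) := by
          rw [Real.log_div (by norm_num) (by positivity), Real.log_mul (ne_of_gt hl)
            (by positivity)]
          ring
      _ ≤ Real.log (Real.sinh g) := Real.log_le_log (by positivity) hsg_lo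
      _ ≤ Real.arsinh (Real.sinh g) := log_le_arsinh hsg
  -- upper bound on g
  have hgup : g ≤ K - Real.log l := by
    rw [hgar]
    calc Real.arsinh (Real.sinh g) ≤ Real.log (2 * Real.sinh g + 1) :=
          arsinh_le_log (le_of_lt hsg)
      _ ≤ Real.log ((8 * Real.cosh (P / 2) + P) / l) := by
          apply Real.log_le_log (by positivity)
          rw [le_div_iff₀ hl]
          have h2 : 2 * Real.sinh g * l ≤ 8 * Real.cosh (P / 2) := by
            have := (le_div_iff₀ hl).1 hsg_up
            nlinarith
          nlinarith
      _ = K - Real.log l := by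
          rw [Real.log_div (by positivity) (ne_of_gt hl)]
  have hlog2 : (0 : ℝ) ≤ Real.log 2 := Real.log_nonneg (by norm_num)
  have hlogE : (0 : ℝ) ≤ Real.log E := Real.log_nonneg hE1
  have habsP : (0 : ℝ) ≤ |Real.log P| := abs_nonneg _
  rcases le_or_gt l 1 with h | h
  · have hll : |Real.log l| = -Real.log l :=
      abs_of_nonpos (Real.log_nonpos (le_of_lt hl) h)
    rw [hll, abs_le]
    constructor <;> linarith
  · have hll : |Real.log l| = Real.log l := abs_of_pos (Real.log_pos h)
    have h1 : (0 : ℝ) < Real.log l := Real.log_pos h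
    have h2 : Real.log l ≤ |Real.log P| :=
      le_trans (Real.log_le_log hl hlP) (le_abs_self _)
    rw [hll, abs_le]
    constructor <;> linarith
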